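/- arXiv:2409.00306 — 3 statements merged into one kernel-verified Lean document; each statement's English description precedes it below -/
import Mathlib

section
/- For all real a > 1 and every integer n ≥ 2, the sum over j from 2 to n of 1/(a^j - 1) is at most -ln(1 - 1/a)/ln(a). -/
/-!
Each term is dominated by an increment of `m ↦ log (1 - a⁻ᵐ) / log a`: with `u = 1 - a⁻ᵏ` and
`v = 1 - a⁻⁽ᵏ⁺¹⁾`, the bound `1 - u / v ≤ log (v / u)` gives
`(a - 1) / (a ^ (k + 1) - 1) ≤ log v - log u`, and `log a ≤ a - 1` does the rest. The sum therefore
telescopes to at most `(log (1 - a⁻ⁿ) - log (1 - a⁻¹)) / log a`, and `log (1 - a⁻ⁿ) ≤ 0`.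
-/

open Real Finset

lemma Real.sub_div_le_log_sub_log {u v : ℝ} (hu : 0 < u) (hv : 0 < v) :
    (v - u) / v ≤ log v - log u := by
  have h := one_sub_inv_le_log_of_pos (div_pos hv hu)
  rwa [log_div hv.ne' hu.ne', inv_div, one_sub_div hv.ne'] at h

section

variable {a : ℝ}

lemma one_sub_one_div_pow_pos (ha : 1 < a) {k : ℕ} (hk : 1 ≤ k) : 0 < 1 - 1 / a ^ k :=
  sub_pos.2 ((div_lt_one (by positivity)).2 (one_lt_pow₀ ha (by omega)))

lemma div_pow_succ_sub_one_le_log_sub_log (ha : 1 < a) {k : ℕ} (hk : 1 ≤ k) :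
    (a - 1) / (a ^ (k + 1) - 1) ≤ log (1 - 1 / a ^ (k + 1)) - log (1 - 1 / a ^ k) := by
  have hak : 0 < a ^ k := by positivity
  have hak1 : 1 < a ^ (k + 1) := one_lt_pow₀ ha (by omega)
  have hquot : (1 - 1 / a ^ (k + 1) - (1 - 1 / a ^ k)) / (1 - 1 / a ^ (k + 1))
      = (a - 1) / (a ^ (k + 1) - 1) := by
    have : a ^ (k + 1) - 1 ≠ 0 := by linarith
    field_simp
    ring
  rw [← hquot]
  exact sub_div_le_log_sub_log (one_sub_one_div_pow_pos ha hk)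
    (one_sub_one_div_pow_pos ha (by omega))

lemma one_div_pow_succ_sub_one_le (ha : 1 < a) {k : ℕ} (hk : 1 ≤ k) :
    1 / (a ^ (k + 1) - 1) ≤ (log (1 - 1 / a ^ (k + 1)) - log (1 - 1 / a ^ k)) / log a := by
  have hden : 0 < a ^ (k + 1) - 1 := by linarith [one_lt_pow₀ ha (n := k + 1) (by omega)]
  rw [le_div_iff₀ (log_pos ha), one_div_mul_eq_div]
  calc log a / (a ^ (k + 1) - 1) ≤ (a - 1) / (a ^ (k + 1) - 1) := by
        gcongr
        exact log_le_sub_one_of_pos (by linarith)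
    _ ≤ _ := div_pow_succ_sub_one_le_log_sub_log ha hk

lemma sum_Icc_two_one_div_pow_sub_one_le (ha : 1 < a) {n : ℕ} (hn : 1 ≤ n) :
    ∑ j ∈ Icc 2 n, 1 / (a ^ j - 1) ≤ (log (1 - 1 / a ^ n) - log (1 - 1 / a)) / log a := by
  induction n, hn using Nat.le_induction with
  | base => simp
  | succ k hk ih =>
    rw [sum_Icc_succ_top (by omega)]
    calc ∑ j ∈ Icc 2 k, 1 / (a ^ j - 1) + 1 / (a ^ (k + 1) - 1)
        ≤ (log (1 - 1 / a ^ k) - log (1 - 1 / a)) / log a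
          + (log (1 - 1 / a ^ (k + 1)) - log (1 - 1 / a ^ k)) / log a :=
          add_le_add ih (one_div_pow_succ_sub_one_le ha hk)
      _ = (log (1 - 1 / a ^ (k + 1)) - log (1 - 1 / a)) / log a := by ring

end

theorem stmt_1 (a : ℝ) (ha : 1 < a) (n : ℕ) (hn : 2 ≤ n) :
    ∑ j ∈ Finset.Icc 2 n, 1 / (a ^ j - 1) ≤ - Real.log (1 - 1 / a) / Real.log a := by
  have hlog_nonpos : log (1 - 1 / a ^ n) ≤ 0 :=
    log_nonpos (one_sub_one_div_pow_pos ha (by omega)).le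
      (sub_le_self _ (by positivity))
  calc ∑ j ∈ Icc 2 n, 1 / (a ^ j - 1)
      ≤ (log (1 - 1 / a ^ n) - log (1 - 1 / a)) / log a :=
        sum_Icc_two_one_div_pow_sub_one_le ha (by omega)
    _ ≤ -log (1 - 1 / a) / log a := by
        gcongr
        · exact (log_pos ha).le
        · linarith
end

section
/- For the (1+1) EA with one-bit mutation optimizing LeadingOnes of size n under one-bit noise with rate q < 1 and without re-evaluations, the expected number of iterations until the algorithm's stored parent is the all-ones string with correctly evaluated fitness is at most (1+q)n²/(1-q)² + 3q/(2(1-q)). -/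
open MeasureTheory ENNReal

/-- The LeadingOnes value of a bit string. -/
def leadingOnes {n : ℕ} (x : Fin n → Bool) : ℕ :=
  (Finset.univ.filter (fun i : Fin n => ∀ j : Fin n, j ≤ i → x j = true)).card

/-- One-bit noise with rate `q`: with probability `q` a uniformly random position is
flipped (returned as `some i`), otherwise nothing is flipped (`none`). -/
noncomputable def oneBitNoise (n : ℕ) (hn : 0 < n) (q : ℝ) (hq1 : q ≤ 1) :
    PMF (Option (Fin n)) :=
  (PMF.bernoulli (Real.toNNReal q) (Real.toNNReal_le_one.mpr hq1)).bind
    (fun b =>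
      if b then
        haveI : Nonempty (Fin n) := Fin.pos_iff_nonempty.mp hn
        (PMF.uniformOfFintype (Fin n)).map some
      else PMF.pure none)

/-- Apply a (possibly absent) one-bit flip to a bit string. -/
def applyOneFlip {n : ℕ} (x : Fin n → Bool) : Option (Fin n) → (Fin n → Bool)
  | none => x
  | some i => Function.update x i (!x i)

/-- States of the (1+1) EA without re-evaluations: the current parent, its stored
(once-evaluated, possibly noisy) fitness value, and a flag recording whether the
algorithm has already had the all-ones string as parent with correctly evaluated
fitness `n`. -/
abbrev EAState (n : ℕ) : Type := (Fin n → Bool) × ℕ × Bool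

/-- Whether parent `x` with stored fitness `fx` is the all-ones string evaluated
properly (stored fitness equal to the true optimum value `n`). -/
def isOpt (n : ℕ) (x : Fin n → Bool) (fx : ℕ) : Bool :=
  decide ((∀ j : Fin n, x j = true) ∧ fx = n)

/-- One iteration of the (1+1) EA with one-bit mutation on LeadingOnes under one-bit
noise with rate `q`, without re-evaluations: mutate the parent by flipping one
uniformly random bit, evaluate the offspring once under noise, and accept it iff its
noisy fitness is at least the stored fitness of the parent. -/
noncomputable def eaStep (n : ℕ) (hn : 0 < n) (q : ℝ) (hq1 : q ≤ 1) :
    EAState n → PMF (EAState n) := fun s =>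
  haveI : Nonempty (Fin n) := Fin.pos_iff_nonempty.mp hn
  (PMF.uniformOfFintype (Fin n)).bind (fun i =>
    (oneBitNoise n hn q hq1).bind (fun o =>
      let y := Function.update s.1 i (!s.1 i)
      let fy := leadingOnes (applyOneFlip y o)
      let x' := if s.2.1 ≤ fy then y else s.1
      let fx' := if s.2.1 ≤ fy then fy else s.2.1
      PMF.pure (x', fx', s.2.2 || isOpt n x' fx')))

/-- The initial state of the (1+1) EA: a uniformly random parent, evaluated once
under one-bit noise. -/
noncomputable def eaInit (n : ℕ) (hn : 0 < n) (q : ℝ) (hq1 : q ≤ 1) :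
    PMF (EAState n) :=
  (PMF.uniformOfFintype (Fin n → Bool)).bind (fun x =>
    (oneBitNoise n hn q hq1).bind (fun o =>
      let fx := leadingOnes (applyOneFlip x o)
      PMF.pure (x, fx, isOpt n x fx)))

/-- The distribution of the state of the (1+1) EA at the beginning of iteration `t`. -/
noncomputable def eaDist (n : ℕ) (hn : 0 < n) (q : ℝ) (hq1 : q ≤ 1) :
    ℕ → PMF (EAState n)
  | 0 => eaInit n hn q hq1
  | t + 1 => (eaDist n hn q hq1 t).bind (eaStep n hn q hq1)

/-! A drift argument. With `f` the stored fitness, `c = n(1+q)/(1-q)²` and `d = n/(1-q)`, the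
potential is `c (n - f) + [f ≠ LeadingOnes x] d`, and `0` once the optimum has been stored.
From every reachable unfinished state it drops by at least one per iteration in expectation.
No step of a mis-evaluated parent increases it, and with probability at least `(1-q)/n` the
parent is replaced by a correctly evaluated offspring of at least its stored fitness (flip the bit
whose noise produced that value, evaluate without noise), which gains `d`. A correctly evaluated
parent gains `c` by flipping its first zero without noise (probability `(1-q)/n`) and loses at
most `d`, only when the noise undoes the mutation (probability `q/n`); `(1-q) c - q d = d ≥ n`.
The initial potential is at most `c n = (1+q)n²/(1-q)²` in expectation. -/

open Function

section LeadingOnes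

variable {n : ℕ}

theorem leadingOnes_le (x : Fin n → Bool) : leadingOnes x ≤ n :=
  (Finset.card_le_univ _).trans_eq (Fintype.card_fin n)

theorem lt_leadingOnes_iff {x : Fin n → Bool} {i : Fin n} :
    (i : ℕ) < leadingOnes x ↔ ∀ j ≤ i, x j = true := by
  constructor
  · intro h
    by_contra hi
    have hsub : Finset.univ.filter (fun k : Fin n => ∀ j ≤ k, x j = true) ⊆ Finset.Iio i := by
      intro k hk
      simp only [Finset.mem_filter, Finset.mem_univ, true_and] at hk
      exact Finset.mem_Iio.2 (lt_of_not_ge fun hik => hi fun j hj => hk j (hj.trans hik))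
    have := Finset.card_le_card hsub
    rw [Fin.card_Iio] at this
    exact absurd h (not_lt.2 this)
  · intro h
    have hsub : Finset.Iic i ⊆ Finset.univ.filter (fun k : Fin n => ∀ j ≤ k, x j = true) := by
      intro k hk
      simp only [Finset.mem_filter, Finset.mem_univ, true_and]
      exact fun j hj => h j (hj.trans (Finset.mem_Iic.1 hk))
    have := Finset.card_le_card hsub
    rw [Fin.card_Iic] at this
    exact this

theorem apply_eq_true_of_lt_leadingOnes {x : Fin n → Bool} {j : Fin n}
    (h : (j : ℕ) < leadingOnes x) : x j = true :=
  lt_leadingOnes_iff.1 h j le_rfl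

theorem apply_leadingOnes_eq_false {x : Fin n → Bool} (h : leadingOnes x < n) :
    x ⟨leadingOnes x, h⟩ = false := by
  by_contra hx
  rw [Bool.not_eq_false] at hx
  refine lt_irrefl (leadingOnes x)
    (lt_leadingOnes_iff (i := ⟨leadingOnes x, h⟩).2 fun j hj => ?_)
  rcases hj.lt_or_eq with hj | rfl
  · exact apply_eq_true_of_lt_leadingOnes hj
  · exact hx

theorem leadingOnes_eq_of {x : Fin n → Bool} {m : ℕ} (hm : m ≤ n)
    (htrue : ∀ j : Fin n, (j : ℕ) < m → x j = true)
    (hfalse : ∀ h : m < n, x ⟨m, h⟩ = false) : leadingOnes x = m := by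
  rcases lt_trichotomy (leadingOnes x) m with h | h | h
  · have hlt : leadingOnes x < n := h.trans_le hm
    simpa [apply_leadingOnes_eq_false hlt] using htrue ⟨_, hlt⟩ h
  · exact h
  · have hlt : m < n := h.trans_le (leadingOnes_le x)
    simpa [hfalse hlt] using apply_eq_true_of_lt_leadingOnes (j := ⟨m, hlt⟩) h

theorem leadingOnes_eq_length_iff {x : Fin n → Bool} :
    leadingOnes x = n ↔ ∀ j, x j = true :=
  ⟨fun h j => apply_eq_true_of_lt_leadingOnes (h.symm ▸ j.isLt),
    fun h => leadingOnes_eq_of le_rfl (fun j _ => h j) (fun h => absurd h (lt_irrefl n))⟩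

theorem leadingOnes_update_not_of_lt {z : Fin n → Bool} {u : Fin n}
    (h : (u : ℕ) < leadingOnes z) : leadingOnes (update z u (!z u)) = u :=
  leadingOnes_eq_of u.isLt.le
    (fun j hj => by
      rw [update_of_ne (Fin.ne_of_lt hj)]
      exact apply_eq_true_of_lt_leadingOnes (hj.trans h))
    (fun _ => by simp [apply_eq_true_of_lt_leadingOnes h])

theorem leadingOnes_update_of_gt {z : Fin n → Bool} {u : Fin n}
    (h : leadingOnes z < u) (b : Bool) : leadingOnes (update z u b) = leadingOnes z :=
  leadingOnes_eq_of (leadingOnes_le z)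
    (fun j hj => by
      rw [update_of_ne (Fin.ne_of_lt (hj.trans h))]
      exact apply_eq_true_of_lt_leadingOnes hj)
    (fun hlt => by
      rw [update_of_ne (Fin.ne_of_lt h)]
      exact apply_leadingOnes_eq_false hlt)

theorem leadingOnes_lt_leadingOnes_update_not {z : Fin n → Bool} {u : Fin n}
    (h : (u : ℕ) = leadingOnes z) : leadingOnes z < leadingOnes (update z u (!z u)) := by
  have hu : u = ⟨leadingOnes z, h ▸ u.isLt⟩ := Fin.ext h
  rw [← h]
  refine lt_leadingOnes_iff.2 fun j hj => ?_
  rcases hj.lt_or_eq with hj | rfl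
  · rw [update_of_ne (Fin.ne_of_lt hj)]
    exact apply_eq_true_of_lt_leadingOnes (h ▸ hj)
  · rw [update_self, hu, apply_leadingOnes_eq_false (x := z)]
    rfl

theorem leadingOnes_update_not_trichotomy (z : Fin n → Bool) (u : Fin n) :
    ((u : ℕ) < leadingOnes z → leadingOnes (update z u (!z u)) = u) ∧
    ((u : ℕ) = leadingOnes z → leadingOnes z < leadingOnes (update z u (!z u))) ∧
    (leadingOnes z < u → leadingOnes (update z u (!z u)) = leadingOnes z) :=
  ⟨leadingOnes_update_not_of_lt, leadingOnes_lt_leadingOnes_update_not,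
    fun h => leadingOnes_update_of_gt h _⟩

theorem leadingOnes_update_not_eq_of_update_not_update_not_eq {x : Fin n → Bool} {i u : Fin n}
    (hu : u ≠ i)
    (h : leadingOnes (update (update x i (!x i)) u (!update x i (!x i) u)) = leadingOnes x) :
    leadingOnes (update x i (!x i)) = leadingOnes x := by
  have hui : (u : ℕ) ≠ i := Fin.val_ne_of_ne hu
  have hx := leadingOnes_update_not_trichotomy x i
  have hy := leadingOnes_update_not_trichotomy (update x i (!x i)) u
  rcases lt_trichotomy (i : ℕ) (leadingOnes x) with hi | hi | hi
  · rcases lt_trichotomy (u : ℕ) (leadingOnes (update x i (!x i))) with hu' | hu' | hu' <;> omega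
  · rcases lt_trichotomy (u : ℕ) (leadingOnes (update x i (!x i))) with hu' | hu' | hu' <;> omega
  · omega

end LeadingOnes

namespace PMF

variable {α β : Type*}

noncomputable def lexpect (p : PMF α) (f : α → ℝ≥0∞) : ℝ≥0∞ := ∑' a, p a * f a

theorem lexpect_bind (p : PMF α) (m : α → PMF β) (f : β → ℝ≥0∞) :
    (p.bind m).lexpect f = p.lexpect fun a => (m a).lexpect f := by
  simp only [lexpect, bind_apply, ← ENNReal.tsum_mul_right, ← ENNReal.tsum_mul_left, mul_assoc]
  exact ENNReal.tsum_comm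

theorem lexpect_pure (a : α) (f : α → ℝ≥0∞) : (PMF.pure a).lexpect f = f a := by
  rw [lexpect, tsum_eq_single a (fun b hb => by simp [hb])]
  simp

theorem lexpect_add (p : PMF α) (f g : α → ℝ≥0∞) :
    p.lexpect (f + g) = p.lexpect f + p.lexpect g := by
  simp only [lexpect, Pi.add_apply, mul_add, ENNReal.tsum_add]

theorem lexpect_const (p : PMF α) (c : ℝ≥0∞) : p.lexpect (fun _ => c) = c := by
  rw [lexpect, ENNReal.tsum_mul_right, tsum_coe, one_mul]

theorem lexpect_mono {p : PMF α} {f g : α → ℝ≥0∞} (h : ∀ a ∈ p.support, f a ≤ g a) :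
    p.lexpect f ≤ p.lexpect g := by
  refine ENNReal.tsum_le_tsum fun a => ?_
  by_cases ha : p a = 0
  · simp [ha]
  · exact mul_le_mul_right (h a ha) _

theorem lexpect_le_const {p : PMF α} {f : α → ℝ≥0∞} {c : ℝ≥0∞}
    (h : ∀ a, f a ≤ c) :
    p.lexpect f ≤ c :=
  (lexpect_mono fun a _ => h a).trans_eq (lexpect_const p c)

theorem toOuterMeasure_eq_lexpect (p : PMF α) (s : Set α) :
    p.toOuterMeasure s = p.lexpect (s.indicator 1) := by
  rw [toOuterMeasure_apply, lexpect]
  congr 1 with a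
  by_cases ha : a ∈ s <;> simp [ha]

theorem lexpect_uniformOfFintype_ofReal {ι : Type*} [Fintype ι] [Nonempty ι] (f : ι → ℝ)
    (hf : ∀ i, 0 ≤ f i) :
    (uniformOfFintype ι).lexpect (fun i => ENNReal.ofReal (f i))
      = ENNReal.ofReal ((Fintype.card ι : ℝ)⁻¹ * ∑ i, f i) := by
  rw [lexpect, tsum_fintype, ENNReal.ofReal_mul (by positivity),
    ENNReal.ofReal_sum_of_nonneg fun i _ => hf i, Finset.mul_sum,
    ENNReal.ofReal_inv_of_pos (by exact_mod_cast Fintype.card_pos), ENNReal.ofReal_natCast]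
  simp

theorem tsum_toOuterMeasure_le_of_drift (μ : ℕ → PMF α) (K : α → PMF α)
    (hμ : ∀ t, μ (t + 1) = (μ t).bind K) (A I : Set α) (V : α → ℝ≥0∞)
    (hI₀ : (μ 0).support ⊆ I) (hIK : ∀ s ∈ I, (K s).support ⊆ I)
    (hV : ∀ s ∈ I, A.indicator 1 s + (K s).lexpect V ≤ V s) :
    ∑' t, (μ t).toOuterMeasure A ≤ (μ 0).lexpect V := by
  have hI : ∀ t, (μ t).support ⊆ I := by
    intro t
    induction t with
    | zero => exact hI₀
    | succ t ih =>
      intro s hs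
      rw [hμ, mem_support_bind_iff] at hs
      obtain ⟨s₀, hs₀, hs⟩ := hs
      exact hIK s₀ (ih hs₀) hs
  have hstep : ∀ t, (μ t).toOuterMeasure A + (μ (t + 1)).lexpect V ≤ (μ t).lexpect V := by
    intro t
    rw [toOuterMeasure_eq_lexpect, hμ, lexpect_bind, ← lexpect_add]
    exact lexpect_mono fun s hs => hV s (hI t hs)
  have hsum : ∀ N, ∑ t ∈ Finset.range N, (μ t).toOuterMeasure A + (μ N).lexpect V
      ≤ (μ 0).lexpect V := by
    intro N
    induction N with
    | zero => simp
    | succ N ih =>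
      rw [Finset.sum_range_succ, add_assoc]
      exact (add_le_add_right (hstep N) _).trans ih
  rw [ENNReal.tsum_eq_iSup_nat]
  exact iSup_le fun N => le_self_add.trans (hsum N)

end PMF

namespace OnePlusOneEA

variable {n : ℕ} {q : ℝ}

noncomputable def noiseMean (n : ℕ) (q : ℝ) (F : Option (Fin n) → ℝ) : ℝ :=
  (1 - q) * F none + q * ((n : ℝ)⁻¹ * ∑ u, F (some u))

noncomputable def stepMean (n : ℕ) (q : ℝ) (F : Fin n → Option (Fin n) → ℝ) : ℝ :=
  (n : ℝ)⁻¹ * ∑ i, noiseMean n q (F i)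

theorem noiseMean_nonneg (hq0 : 0 ≤ q) (hq1 : q ≤ 1) {F : Option (Fin n) → ℝ}
    (hF : ∀ o, 0 ≤ F o) : 0 ≤ noiseMean n q F := by
  have := Finset.sum_nonneg fun u (_ : u ∈ Finset.univ) => hF (some u)
  unfold noiseMean
  have := hF none
  have : 0 ≤ 1 - q := by linarith
  positivity

theorem stepMean_nonneg (hq0 : 0 ≤ q) (hq1 : q ≤ 1) {F : Fin n → Option (Fin n) → ℝ}
    (hF : ∀ i o, 0 ≤ F i o) : 0 ≤ stepMean n q F :=
  mul_nonneg (by positivity)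
    (Finset.sum_nonneg fun i _ => noiseMean_nonneg hq0 hq1 (hF i))

theorem noiseMean_mono (hq0 : 0 ≤ q) (hq1 : q ≤ 1) {F G : Option (Fin n) → ℝ}
    (h : ∀ o, F o ≤ G o) : noiseMean n q F ≤ noiseMean n q G := by
  have := Finset.sum_le_sum fun u (_ : u ∈ Finset.univ) => h (some u)
  unfold noiseMean
  gcongr
  exact h none

theorem lexpect_oneBitNoise_ofReal (hn : 0 < n) (hq0 : 0 ≤ q) (hq1 : q ≤ 1)
    (F : Option (Fin n) → ℝ) (hF : ∀ o, 0 ≤ F o) :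
    (oneBitNoise n hn q hq1).lexpect (fun o => ENNReal.ofReal (F o))
      = ENNReal.ofReal (noiseMean n q F) := by
  have : Nonempty (Fin n) := Fin.pos_iff_nonempty.mp hn
  have hsum : (PMF.uniformOfFintype (Fin n)).lexpect (fun u => ENNReal.ofReal (F (some u)))
      = ENNReal.ofReal ((n : ℝ)⁻¹ * ∑ u, F (some u)) := by
    simpa using PMF.lexpect_uniformOfFintype_ofReal (fun u => F (some u)) fun u => hF _
  have hmean := Finset.sum_nonneg fun u (_ : u ∈ Finset.univ) => hF (some u)
  have hcoeff : ((1 - q.toNNReal : NNReal) : ℝ≥0∞) = ENNReal.ofReal (1 - q) := by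
    rw [ENNReal.ofReal_sub 1 hq0, ENNReal.ofReal_one, ENNReal.coe_sub, ENNReal.coe_one]
    rfl
  rw [oneBitNoise, PMF.lexpect_bind, PMF.lexpect, tsum_bool]
  simp only [PMF.bernoulli_apply, cond_false, cond_true, Bool.false_eq_true, if_false, if_true,
    PMF.lexpect_pure, PMF.map, PMF.lexpect_bind, Function.comp_def, hsum, hcoeff]
  rw [noiseMean, ENNReal.ofReal_add (mul_nonneg (by linarith) (hF none)) (by positivity),
    ENNReal.ofReal_mul (by linarith : 0 ≤ 1 - q), ENNReal.ofReal_mul hq0,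
    ENNReal.ofReal_mul (by positivity : (0 : ℝ) ≤ (n : ℝ)⁻¹)]
  rfl

theorem stepMean_le (hn : 0 < n) (hq0 : 0 ≤ q) (hq1 : q ≤ 1)
    {F : Fin n → Option (Fin n) → ℝ} {g a b : ℝ} (i₀ : Fin n)
    (hF : ∀ i o, F i o
      ≤ g - (if i = i₀ ∧ o = none then a else 0) + (if o = some i then b else 0)) :
    stepMean n q F ≤ g - ((1 - q) * a - q * b) / n := by
  have hnR : (n : ℝ) ≠ 0 := by positivity
  have hnoise : ∀ i,
      noiseMean n q (F i) ≤ g - (if i = i₀ then (1 - q) * a else 0) + q * b / n := by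
    intro i
    refine (noiseMean_mono hq0 hq1 (hF i)).trans (le_of_eq ?_)
    by_cases hi : i = i₀ <;>
    · simp [noiseMean, hi, Finset.sum_add_distrib]
      field_simp
      ring
  calc stepMean n q F
      ≤ (n : ℝ)⁻¹ * ∑ i, (g - (if i = i₀ then (1 - q) * a else 0) + q * b / n) := by
        unfold stepMean
        gcongr with i
        exact hnoise i
    _ = g - ((1 - q) * a - q * b) / n := by
        simp [Finset.sum_add_distrib, Finset.sum_sub_distrib]
        field_simp
        ring

def next (s : EAState n) (i : Fin n) (o : Option (Fin n)) : EAState n :=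
  let y := update s.1 i (!s.1 i)
  let fy := leadingOnes (applyOneFlip y o)
  (if s.2.1 ≤ fy then y else s.1, if s.2.1 ≤ fy then fy else s.2.1,
    s.2.2 || isOpt n (if s.2.1 ≤ fy then y else s.1) (if s.2.1 ≤ fy then fy else s.2.1))

theorem eaStep_eq_bind (hn : 0 < n) (q : ℝ) (hq1 : q ≤ 1) (s : EAState n) :
    eaStep n hn q hq1 s
      = have : Nonempty (Fin n) := Fin.pos_iff_nonempty.mp hn
        (PMF.uniformOfFintype (Fin n)).bind fun i =>
          (oneBitNoise n hn q hq1).bind fun o => PMF.pure (next s i o) :=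
  rfl

variable {s : EAState n} {i : Fin n} {o : Option (Fin n)}

theorem next_of_le (h : s.2.1 ≤ leadingOnes (applyOneFlip (update s.1 i (!s.1 i)) o)) :
    next s i o = (update s.1 i (!s.1 i), leadingOnes (applyOneFlip (update s.1 i (!s.1 i)) o),
      s.2.2 || isOpt n (update s.1 i (!s.1 i))
        (leadingOnes (applyOneFlip (update s.1 i (!s.1 i)) o))) := by
  simp only [next, if_pos h]

theorem next_of_lt (h : leadingOnes (applyOneFlip (update s.1 i (!s.1 i)) o) < s.2.1) :
    next s i o = (s.1, s.2.1, s.2.2 || isOpt n s.1 s.2.1) := by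
  simp only [next, if_neg (not_le.2 h)]

theorem next_flag (h : s.2.2 = true) : (next s i o).2.2 = true := by
  simp [next, h]

theorem next_fitness_le (h : s.2.1 ≤ n) : (next s i o).2.1 ≤ n := by
  by_cases hacc : s.2.1 ≤ leadingOnes (applyOneFlip (update s.1 i (!s.1 i)) o)
  · rw [next_of_le hacc]
    exact leadingOnes_le _
  · rw [next_of_lt (not_le.1 hacc)]
    exact h

def Reachable (s : EAState n) : Prop :=
  (∃ o, s.2.1 = leadingOnes (applyOneFlip s.1 o)) ∧ (isOpt n s.1 s.2.1 = true → s.2.2 = true)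

theorem Reachable.fitness_le (hs : Reachable s) : s.2.1 ≤ n := by
  obtain ⟨⟨o, ho⟩, -⟩ := hs
  exact ho ▸ leadingOnes_le _

theorem Reachable.next (hs : Reachable s) (i : Fin n) (o : Option (Fin n)) :
    Reachable (next s i o) := by
  refine ⟨?_, fun h => by simp [OnePlusOneEA.next, h] at *⟩
  by_cases hacc : s.2.1 ≤ leadingOnes (applyOneFlip (update s.1 i (!s.1 i)) o)
  · rw [next_of_le hacc]
    exact ⟨o, rfl⟩
  · rw [next_of_lt (not_le.1 hacc)]
    exact hs.1

theorem support_eaInit_subset_reachable (hn : 0 < n) (q : ℝ) (hq1 : q ≤ 1) :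
    (eaInit n hn q hq1).support ⊆ {s | Reachable s} := by
  intro s hs
  simp only [eaInit, PMF.mem_support_bind_iff, PMF.mem_support_pure_iff] at hs
  obtain ⟨x, -, o, -, rfl⟩ := hs
  exact ⟨⟨o, rfl⟩, id⟩

noncomputable def levelCost (n : ℕ) (q : ℝ) : ℝ := n * (1 + q) / (1 - q) ^ 2

noncomputable def misevalCost (n : ℕ) (q : ℝ) : ℝ := n / (1 - q)

noncomputable def potential (q : ℝ) (s : EAState n) : ℝ :=
  if s.2.2 then 0
  else levelCost n q * (n - s.2.1) + if s.2.1 = leadingOnes s.1 then 0 else misevalCost n q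

theorem misevalCost_mul_one_sub (hq1 : q < 1) : misevalCost n q * (1 - q) = n := by
  have : 1 - q ≠ 0 := by linarith
  unfold misevalCost
  field_simp

theorem levelCost_mul_one_sub (hq1 : q < 1) :
    levelCost n q * (1 - q) = misevalCost n q * (1 + q) := by
  have : 1 - q ≠ 0 := by linarith
  unfold levelCost misevalCost
  field_simp

theorem le_misevalCost (hq0 : 0 ≤ q) (hq1 : q < 1) : (n : ℝ) ≤ misevalCost n q := by
  have h := misevalCost_mul_one_sub (n := n) hq1
  have : 0 ≤ misevalCost n q := div_nonneg (Nat.cast_nonneg n) (by linarith)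
  nlinarith

theorem misevalCost_le_levelCost (hq0 : 0 ≤ q) (hq1 : q < 1) :
    misevalCost n q ≤ levelCost n q := by
  have h₁ := misevalCost_mul_one_sub (n := n) hq1
  have h₂ := levelCost_mul_one_sub (n := n) hq1
  have : 0 ≤ misevalCost n q := (Nat.cast_nonneg n).trans (le_misevalCost hq0 hq1)
  nlinarith

theorem misevalCost_nonneg (hq0 : 0 ≤ q) (hq1 : q < 1) : 0 ≤ misevalCost n q :=
  (Nat.cast_nonneg n).trans (le_misevalCost hq0 hq1)

theorem levelCost_nonneg (hq0 : 0 ≤ q) (hq1 : q < 1) : 0 ≤ levelCost n q :=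
  (misevalCost_nonneg hq0 hq1).trans (misevalCost_le_levelCost hq0 hq1)

theorem potential_of_flag_false (h : s.2.2 = false) :
    potential q s = levelCost n q * (n - s.2.1)
      + if s.2.1 = leadingOnes s.1 then 0 else misevalCost n q := by
  simp [potential, h]

theorem potential_le (hq0 : 0 ≤ q) (hq1 : q < 1) (hf : s.2.1 ≤ n) :
    potential q s ≤ levelCost n q * (n - s.2.1)
      + if s.2.1 = leadingOnes s.1 then 0 else misevalCost n q := by
  have hfR : (s.2.1 : ℝ) ≤ n := by exact_mod_cast hf
  have := levelCost_nonneg (n := n) hq0 hq1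
  have := misevalCost_nonneg (n := n) hq0 hq1
  unfold potential
  split_ifs <;> nlinarith

theorem potential_le_add_misevalCost (hq0 : 0 ≤ q) (hq1 : q < 1) (hf : s.2.1 ≤ n) :
    potential q s ≤ levelCost n q * (n - s.2.1) + misevalCost n q := by
  have := misevalCost_nonneg (n := n) hq0 hq1
  refine (potential_le hq0 hq1 hf).trans ?_
  split_ifs <;> linarith

theorem potential_nonneg (hq0 : 0 ≤ q) (hq1 : q < 1) (hf : s.2.1 ≤ n) :
    0 ≤ potential q s := by
  have hfR : (s.2.1 : ℝ) ≤ n := by exact_mod_cast hf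
  have := levelCost_nonneg (n := n) hq0 hq1
  have := misevalCost_nonneg (n := n) hq0 hq1
  unfold potential
  split_ifs <;> nlinarith

theorem potential_next_le_of_lt (hq0 : 0 ≤ q) (hq1 : q < 1) (hf : s.2.1 ≤ n)
    (h : leadingOnes (applyOneFlip (update s.1 i (!s.1 i)) o) < s.2.1) :
    potential q (next s i o) ≤ potential q s := by
  rw [next_of_lt h]
  cases hb : s.2.2
  · rcases hopt : isOpt n s.1 s.2.1
    · simp [potential, hb]
    · simpa [potential, hopt] using potential_nonneg hq0 hq1 hf
  · simp [potential, hb]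

theorem potential_next_le_of_le (hq0 : 0 ≤ q) (hq1 : q < 1)
    (h : s.2.1 ≤ leadingOnes (applyOneFlip (update s.1 i (!s.1 i)) o)) :
    potential q (next s i o)
      ≤ levelCost n q * (n - leadingOnes (applyOneFlip (update s.1 i (!s.1 i)) o))
        + if leadingOnes (applyOneFlip (update s.1 i (!s.1 i)) o)
            = leadingOnes (update s.1 i (!s.1 i)) then 0 else misevalCost n q := by
  rw [next_of_le h]
  exact potential_le hq0 hq1 (leadingOnes_le _)

theorem potential_next_le (hq0 : 0 ≤ q) (hq1 : q < 1) (hf : s.2.1 ≤ n) :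
    potential q (next s i o) ≤ levelCost n q * (n - s.2.1) + misevalCost n q := by
  have hc := levelCost_nonneg (n := n) hq0 hq1
  have hd := misevalCost_nonneg (n := n) hq0 hq1
  rcases lt_or_ge (leadingOnes (applyOneFlip (update s.1 i (!s.1 i)) o)) s.2.1 with h | h
  · exact (potential_next_le_of_lt hq0 hq1 hf h).trans (potential_le_add_misevalCost hq0 hq1 hf)
  · have hR : (s.2.1 : ℝ) ≤ leadingOnes (applyOneFlip (update s.1 i (!s.1 i)) o) := by
      exact_mod_cast h
    refine (potential_next_le_of_le hq0 hq1 h).trans ?_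
    split_ifs <;> nlinarith

theorem potential_next_none_le (hq0 : 0 ≤ q) (hq1 : q < 1) (hfl : s.2.2 = false)
    (hf : s.2.1 = leadingOnes s.1) (i : Fin n) :
    potential q (next s i none)
      ≤ levelCost n q * (n - s.2.1) - if (i : ℕ) = s.2.1 then levelCost n q else 0 := by
  have hc := levelCost_nonneg (n := n) hq0 hq1
  have hx := leadingOnes_update_not_trichotomy s.1 i
  have hfn : s.2.1 ≤ n := hf ▸ leadingOnes_le _
  rcases lt_or_ge (leadingOnes (applyOneFlip (update s.1 i (!s.1 i)) none)) s.2.1 with h | h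
  · have hi : (i : ℕ) ≠ s.2.1 := by simp only [applyOneFlip] at h; omega
    refine (potential_next_le_of_lt hq0 hq1 hfn h).trans_eq ?_
    rw [potential_of_flag_false hfl, if_pos hf, if_neg hi]
    ring
  · refine (potential_next_le_of_le hq0 hq1 h).trans ?_
    simp only [applyOneFlip, if_true, add_zero] at h ⊢
    split_ifs with hi
    · have : ((s.2.1 + 1 : ℕ) : ℝ) ≤ leadingOnes (update s.1 i (!s.1 i)) := by
        exact_mod_cast (show s.2.1 + 1 ≤ _ by omega)
      push_cast at this
      nlinarith
    · have : (s.2.1 : ℝ) ≤ leadingOnes (update s.1 i (!s.1 i)) := by exact_mod_cast h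
      nlinarith

theorem potential_next_some_le (hq0 : 0 ≤ q) (hq1 : q < 1) (hfl : s.2.2 = false)
    (hf : s.2.1 = leadingOnes s.1) {i u : Fin n} (hu : u ≠ i) :
    potential q (next s i (some u)) ≤ levelCost n q * (n - s.2.1) := by
  have hc := levelCost_nonneg (n := n) hq0 hq1
  have hd := misevalCost_le_levelCost (n := n) hq0 hq1
  have hfn : s.2.1 ≤ n := hf ▸ leadingOnes_le _
  rcases lt_trichotomy (leadingOnes (applyOneFlip (update s.1 i (!s.1 i)) (some u))) s.2.1
    with h | h | h
  · refine (potential_next_le_of_lt hq0 hq1 hfn h).trans_eq ?_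
    rw [potential_of_flag_false hfl, if_pos hf, add_zero]
  · -- a noisy value equal to the parent's after two distinct flips is the offspring's true value
    have hy := leadingOnes_update_not_eq_of_update_not_update_not_eq hu (h.trans hf)
    refine (potential_next_le_of_le hq0 hq1 h.ge).trans_eq ?_
    rw [h, if_pos (hf.trans hy.symm), add_zero]
  · have : ((s.2.1 + 1 : ℕ) : ℝ)
        ≤ leadingOnes (applyOneFlip (update s.1 i (!s.1 i)) (some u)) := by
      exact_mod_cast h
    push_cast at this
    refine (potential_next_le_of_le hq0 hq1 h.le).trans ?_
    split_ifs <;> nlinarith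

theorem stepMean_potential_le_of_correct (hn : 0 < n) (hq0 : 0 ≤ q) (hq1 : q < 1)
    (hfl : s.2.2 = false) (hf : s.2.1 = leadingOnes s.1) (hfn : s.2.1 < n) :
    stepMean n q (fun i o => potential q (next s i o)) ≤ potential q s - 1 := by
  have hnR : (0 : ℝ) < n := by exact_mod_cast hn
  have hd := le_misevalCost (n := n) hq0 hq1
  have hcd := levelCost_mul_one_sub (n := n) hq1
  refine (stepMean_le (g := levelCost n q * (n - s.2.1)) (a := levelCost n q)
    (b := misevalCost n q) hn hq0 hq1.le ⟨_, hfn⟩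
    fun i o => ?_).trans ?_
  · cases o with
    | none =>
      simpa [Fin.ext_iff] using potential_next_none_le hq0 hq1 hfl hf i
    | some u =>
      by_cases hu : u = i
      · subst hu
        simpa using potential_next_le hq0 hq1 hfn.le
      · simpa [hu] using potential_next_some_le hq0 hq1 hfl hf hu
  · have : 1 ≤ ((1 - q) * levelCost n q - q * misevalCost n q) / n := by
      rw [le_div_iff₀ hnR]
      linarith
    rw [potential_of_flag_false hfl, if_pos hf, add_zero]
    linarith

theorem stepMean_potential_le_of_ne (hn : 0 < n) (hq0 : 0 ≤ q) (hq1 : q < 1)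
    (hs : Reachable s) (hfl : s.2.2 = false) (hf : s.2.1 ≠ leadingOnes s.1) :
    stepMean n q (fun i o => potential q (next s i o)) ≤ potential q s - 1 := by
  have hnR : (0 : ℝ) < n := by exact_mod_cast hn
  have hd := misevalCost_mul_one_sub (n := n) hq1
  obtain ⟨o₀, ho₀⟩ := hs.1
  cases o₀ with
  | none => exact absurd ho₀ hf
  | some i₀ =>
    have hy : leadingOnes (update s.1 i₀ (!s.1 i₀)) = s.2.1 := ho₀.symm
    refine (stepMean_le (g := levelCost n q * (n - s.2.1) + misevalCost n q)
      (a := misevalCost n q) (b := 0) hn hq0 hq1.le i₀ fun i o => ?_).trans ?_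
    · by_cases hi : i = i₀ ∧ o = none
      · obtain ⟨rfl, rfl⟩ := hi
        refine (potential_next_le_of_le hq0 hq1 ho₀.le).trans_eq ?_
        simp [applyOneFlip, hy]
      · simpa [hi] using potential_next_le hq0 hq1 hs.fitness_le
    · rw [potential_of_flag_false hfl, if_neg hf]
      field_simp
      linarith

theorem ite_add_stepMean_potential_le (hn : 0 < n) (hq0 : 0 ≤ q) (hq1 : q < 1)
    (hs : Reachable s) :
    (if s.2.2 then 0 else 1) + stepMean n q (fun i o => potential q (next s i o))
      ≤ potential q s := by
  cases hfl : s.2.2 with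
  | true => simp [stepMean, noiseMean, potential, next_flag hfl, hfl]
  | false =>
    rw [if_neg Bool.false_ne_true, add_comm, ← le_sub_iff_add_le]
    by_cases hf : s.2.1 = leadingOnes s.1
    · refine stepMean_potential_le_of_correct hn hq0 hq1 hfl hf (lt_of_le_of_ne hs.fitness_le ?_)
      intro hfn
      have := hs.2 (by simp [isOpt, ← leadingOnes_eq_length_iff, ← hf, hfn])
      simp [hfl] at this
    · exact stepMean_potential_le_of_ne hn hq0 hq1 hs hfl hf

theorem lexpect_eaStep_ofReal (hn : 0 < n) (hq0 : 0 ≤ q) (hq1 : q ≤ 1) (s : EAState n)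
    (V : EAState n → ℝ) (hV : ∀ i o, 0 ≤ V (next s i o)) :
    (eaStep n hn q hq1 s).lexpect (fun s' => ENNReal.ofReal (V s'))
      = ENNReal.ofReal (stepMean n q fun i o => V (next s i o)) := by
  have : Nonempty (Fin n) := Fin.pos_iff_nonempty.mp hn
  simp only [eaStep_eq_bind, PMF.lexpect_bind, PMF.lexpect_pure,
    lexpect_oneBitNoise_ofReal hn hq0 hq1 _ (hV _)]
  rw [PMF.lexpect_uniformOfFintype_ofReal _ fun i => noiseMean_nonneg hq0 hq1 (hV i),
    Fintype.card_fin]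
  rfl

theorem potential_init_le (hq0 : 0 ≤ q) (hq1 : q < 1) (x : Fin n → Bool) (o : Option (Fin n)) :
    potential q ((x, leadingOnes (applyOneFlip x o), isOpt n x (leadingOnes (applyOneFlip x o)))
        : EAState n)
      ≤ levelCost n q * (n - leadingOnes x) + o.elim 0 fun u => if (u : ℕ) < leadingOnes x
          then levelCost n q * leadingOnes x + misevalCost n q else 0 := by
  have hc := levelCost_nonneg (n := n) hq0 hq1
  have hdc := misevalCost_le_levelCost (n := n) hq0 hq1
  cases o with
  | none =>
    refine (potential_le hq0 hq1 (leadingOnes_le _)).trans ?_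
    simp [applyOneFlip]
  | some u =>
    have hx := leadingOnes_update_not_trichotomy x u
    simp only [applyOneFlip, Option.elim_some]
    rcases lt_trichotomy (u : ℕ) (leadingOnes x) with h | h | h
    · have hu : (u : ℝ) ≤ leadingOnes x := by exact_mod_cast h.le
      refine (potential_le_add_misevalCost hq0 hq1 (leadingOnes_le _)).trans ?_
      simp only [hx.1 h, if_pos h]
      nlinarith
    · have : ((leadingOnes x + 1 : ℕ) : ℝ) ≤ leadingOnes (update x u (!x u)) := by
        exact_mod_cast hx.2.1 h
      push_cast at this
      refine (potential_le_add_misevalCost hq0 hq1 (leadingOnes_le _)).trans ?_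
      simp only [if_neg h.not_lt]
      nlinarith
    · refine (potential_le hq0 hq1 (leadingOnes_le _)).trans ?_
      simp only [hx.2.2 h, if_neg (show ¬(u : ℕ) < leadingOnes x by omega)]
      rfl

theorem noiseMean_potential_init_le (hn : 0 < n) (hq0 : 0 ≤ q) (hq1 : q < 1)
    (x : Fin n → Bool) :
    noiseMean n q (fun o => potential q
      ((x, leadingOnes (applyOneFlip x o), isOpt n x (leadingOnes (applyOneFlip x o)))
        : EAState n))
      ≤ levelCost n q * n := by
  refine (noiseMean_mono hq0 hq1.le (potential_init_le hq0 hq1 x)).trans ?_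
  set L := leadingOnes x
  have hL : (L : ℝ) ≤ n := by exact_mod_cast leadingOnes_le x
  have hc := levelCost_nonneg (n := n) hq0 hq1
  have hcd := levelCost_mul_one_sub (n := n) hq1
  have hd := le_misevalCost (n := n) hq0 hq1
  have hnR : (0 : ℝ) < n := by exact_mod_cast hn
  have hsum : ∑ u : Fin n, (if (u : ℕ) < L then levelCost n q * L + misevalCost n q else 0)
      = L * (levelCost n q * L + misevalCost n q) := by
    rw [Finset.sum_ite, Finset.sum_const_zero, add_zero, Finset.sum_const,
      Fin.card_filter_val_lt, min_eq_right (leadingOnes_le x), nsmul_eq_mul]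
  simp only [noiseMean, Option.elim_none, Option.elim_some, add_zero, Finset.sum_add_distrib,
    hsum, Finset.sum_const, Finset.card_univ, Fintype.card_fin, nsmul_eq_mul]
  have hn1 : (1 : ℝ) ≤ n := by exact_mod_cast hn
  have hqd : q * misevalCost n q ≤ (1 - q) * levelCost n q * n := by
    rw [mul_comm (1 - q), hcd]
    nlinarith [mul_le_mul_of_nonneg_left hn1
      (mul_nonneg (hnR.le.trans hd) (by linarith : 0 ≤ 1 + q))]
  have hqL : q * (levelCost n q * L + misevalCost n q) ≤ levelCost n q * n := by
    nlinarith [mul_le_mul_of_nonneg_left hL (mul_nonneg hq0 hc)]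
  have key : q * (L * (levelCost n q * L + misevalCost n q)) ≤ n * (levelCost n q * L) := by
    nlinarith [mul_le_mul_of_nonneg_left hqL (Nat.cast_nonneg (α := ℝ) L)]
  field_simp
  nlinarith

theorem lexpect_eaInit_le (hn : 0 < n) (hq0 : 0 ≤ q) (hq1 : q < 1) :
    (eaInit n hn q hq1.le).lexpect (fun s => ENNReal.ofReal (potential q s))
      ≤ ENNReal.ofReal (levelCost n q * n) := by
  simp only [eaInit, PMF.lexpect_bind, PMF.lexpect_pure]
  refine PMF.lexpect_le_const fun x => ?_
  rw [lexpect_oneBitNoise_ofReal hn hq0 hq1.le _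
    fun o => potential_nonneg hq0 hq1 (leadingOnes_le _)]
  exact ENNReal.ofReal_le_ofReal (noiseMean_potential_init_le hn hq0 hq1 x)

theorem Reachable.support_eaStep (hn : 0 < n) (hq1 : q ≤ 1) (hs : Reachable s) :
    (eaStep n hn q hq1 s).support ⊆ {s' | Reachable s'} := by
  intro s' hs'
  simp only [eaStep_eq_bind, PMF.mem_support_bind_iff, PMF.mem_support_pure_iff] at hs'
  obtain ⟨i, -, o, -, rfl⟩ := hs'
  exact hs.next i o

theorem indicator_add_lexpect_eaStep_le (hn : 0 < n) (hq0 : 0 ≤ q) (hq1 : q < 1)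
    (hs : Reachable s) :
    {s : EAState n | s.2.2 = false}.indicator 1 s
        + (eaStep n hn q hq1.le s).lexpect (fun s' => ENNReal.ofReal (potential q s'))
      ≤ ENNReal.ofReal (potential q s) := by
  have hind : {s : EAState n | s.2.2 = false}.indicator 1 s
      = ENNReal.ofReal (if s.2.2 then 0 else 1) := by
    cases h : s.2.2 <;> simp [h]
  have hnext : ∀ i o, 0 ≤ potential q (next s i o) :=
    fun i o => potential_nonneg hq0 hq1 (next_fitness_le hs.fitness_le)
  rw [hind, lexpect_eaStep_ofReal hn hq0 hq1.le s _ hnext,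
    ← ENNReal.ofReal_add (by split_ifs <;> norm_num) (stepMean_nonneg hq0 hq1.le hnext)]
  exact ENNReal.ofReal_le_ofReal (ite_add_stepMean_potential_le hn hq0 hq1 hs)

end OnePlusOneEA

open OnePlusOneEA in
/-- The expected number of iterations until the (1+1) EA with one-bit mutation,
optimizing LeadingOnes of size `n` under one-bit noise with rate `q < 1` and without
re-evaluations, has the all-ones string as parent with correctly evaluated fitness,
is at most `(1+q)n²/(1-q)² + 3q/(2(1-q))`.  The expected hitting time is expressed as
`∑_{t≥0} P[not yet reached at iteration t]`. -/
theorem stmt_12 (n : ℕ) (hn : 0 < n) (q : ℝ) (hq0 : 0 ≤ q) (hq1 : q < 1) :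
    ∑' t : ℕ,
        (eaDist n hn q hq1.le t).toOuterMeasure {s : EAState n | s.2.2 = false}
      ≤ ENNReal.ofReal ((1 + q) * n ^ 2 / (1 - q) ^ 2 + 3 * q / (2 * (1 - q))) := by
  calc ∑' t : ℕ, (eaDist n hn q hq1.le t).toOuterMeasure {s : EAState n | s.2.2 = false}
      ≤ (eaInit n hn q hq1.le).lexpect (fun s => ENNReal.ofReal (potential q s)) :=
        PMF.tsum_toOuterMeasure_le_of_drift _ _ (fun t => rfl) _ {s | Reachable s} _
          (support_eaInit_subset_reachable hn q hq1.le)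
          (fun s hs => hs.support_eaStep hn hq1.le)
          (fun s hs => indicator_add_lexpect_eaStep_le hn hq0 hq1 hs)
    _ ≤ ENNReal.ofReal (levelCost n q * n) := lexpect_eaInit_le hn hq0 hq1
    _ ≤ _ := by
        refine ENNReal.ofReal_le_ofReal ?_
        have : 0 ≤ 3 * q / (2 * (1 - q)) := div_nonneg (by linarith) (by linarith)
        have : levelCost n q * n = (1 + q) * n ^ 2 / (1 - q) ^ 2 := by
          rw [levelCost]
          ring
        linarith
end

section
/- For all real r > q > 0 and all integers n ≥ j ≥ 2, ∑_{k=j}^{n} q^k/(r^k - q^k) ≤ -ln(1 - q/r)/ln(r/q). -/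
/-!
With `x = q / r ∈ (0, 1)` the summand is `x ^ k / (1 - x ^ k)` and `log (r / q) = -log x`.
Each term is dominated by a logarithmic increment,
`-log x * x ^ (m + 1) / (1 - x ^ (m + 1)) ≤ log (1 - x ^ (m + 1)) - log (1 - x ^ m)`,
which follows from `-log x ≤ x⁻¹ - 1` and `1 - y⁻¹ ≤ log y`. Summing from `2` telescopes to
`log (1 - x ^ n) - log (1 - x) ≤ -log (1 - x)`.
-/

open Real Finset

lemma neg_log_mul_pow_succ_div_le_log_sub_log {x : ℝ} (hx0 : 0 < x) (hx1 : x < 1) {m : ℕ}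
    (hm : m ≠ 0) :
    -log x * (x ^ (m + 1) / (1 - x ^ (m + 1))) ≤ log (1 - x ^ (m + 1)) - log (1 - x ^ m) := by
  have hu : 0 < 1 - x ^ m := sub_pos.mpr (pow_lt_one₀ hx0.le hx1 hm)
  have hv : 0 < 1 - x ^ (m + 1) := sub_pos.mpr (pow_lt_one₀ hx0.le hx1 m.succ_ne_zero)
  have hlog : -log x ≤ x⁻¹ - 1 := by
    simpa only [log_inv] using log_le_sub_one_of_pos (inv_pos.mpr hx0)
  calc -log x * (x ^ (m + 1) / (1 - x ^ (m + 1)))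
      ≤ (x⁻¹ - 1) * (x ^ (m + 1) / (1 - x ^ (m + 1))) := by gcongr
    _ = 1 - ((1 - x ^ (m + 1)) / (1 - x ^ m))⁻¹ := by field_simp; ring
    _ ≤ log ((1 - x ^ (m + 1)) / (1 - x ^ m)) := one_sub_inv_le_log_of_pos (div_pos hv hu)
    _ = log (1 - x ^ (m + 1)) - log (1 - x ^ m) := log_div hv.ne' hu.ne'

lemma neg_log_mul_sum_Icc_two_le {x : ℝ} (hx0 : 0 < x) (hx1 : x < 1) (n : ℕ) :
    -log x * ∑ k ∈ Icc 2 (n + 1), x ^ k / (1 - x ^ k) ≤ log (1 - x ^ (n + 1)) - log (1 - x) := by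
  induction n with
  | zero => simp
  | succ n ih =>
    rw [sum_Icc_succ_top (by omega), mul_add]
    linarith [neg_log_mul_pow_succ_div_le_log_sub_log hx0 hx1 (m := n + 1) (by omega)]

lemma neg_log_mul_sum_Icc_le_neg_log_one_sub {x : ℝ} (hx0 : 0 < x) (hx1 : x < 1) {j : ℕ}
    (hj : 2 ≤ j) (n : ℕ) :
    -log x * ∑ k ∈ Icc j n, x ^ k / (1 - x ^ k) ≤ -log (1 - x) := by
  have hterm_nonneg : ∀ k ∈ Icc 2 (n + 1), 0 ≤ x ^ k / (1 - x ^ k) := fun k _ =>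
    div_nonneg (pow_nonneg hx0.le k) (sub_nonneg.mpr (pow_le_one₀ hx0.le hx1.le))
  have hsub : Icc j n ⊆ Icc 2 (n + 1) := Icc_subset_Icc hj n.le_succ
  have hlog_nonpos : log (1 - x ^ (n + 1)) ≤ 0 :=
    log_nonpos (sub_nonneg.mpr (pow_le_one₀ hx0.le hx1.le)) (by linarith [pow_pos hx0 (n + 1)])
  calc -log x * ∑ k ∈ Icc j n, x ^ k / (1 - x ^ k)
      ≤ -log x * ∑ k ∈ Icc 2 (n + 1), x ^ k / (1 - x ^ k) := by
        gcongr
        · linarith [log_neg hx0 hx1]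
        · exact fun k hk _ => hterm_nonneg k hk
    _ ≤ log (1 - x ^ (n + 1)) - log (1 - x) := neg_log_mul_sum_Icc_two_le hx0 hx1 n
    _ ≤ -log (1 - x) := by linarith

theorem stmt_15_general (r q : ℝ) (hq : 0 < q) (hqr : q < r) (j n : ℕ) (hj : 2 ≤ j) :
    ∑ k ∈ Finset.Icc j n, q ^ k / (r ^ k - q ^ k) ≤ - Real.log (1 - q / r) / Real.log (r / q) := by
  have hr : 0 < r := hq.trans hqr
  have hx0 : 0 < q / r := div_pos hq hr
  have hx1 : q / r < 1 := (div_lt_one hr).mpr hqr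
  have hsummand : ∀ k ∈ Icc j n, q ^ k / (r ^ k - q ^ k) = (q / r) ^ k / (1 - (q / r) ^ k) := by
    intro k hk
    have hk0 : k ≠ 0 := by have := (mem_Icc.mp hk).1; omega
    have hden : r ^ k - q ^ k ≠ 0 := (sub_pos.mpr (pow_lt_pow_left₀ hqr hq.le hk0)).ne'
    rw [div_pow]
    field_simp
  have hlog : log (r / q) = -log (q / r) := by rw [← log_inv, inv_div]
  rw [sum_congr rfl hsummand, hlog, le_div_iff₀ (neg_pos.mpr (log_neg hx0 hx1)), mul_comm]
  exact neg_log_mul_sum_Icc_le_neg_log_one_sub hx0 hx1 hj n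

theorem stmt_15 (r q : ℝ) (hq : 0 < q) (hqr : q < r) (j n : ℕ) (hj : 2 ≤ j) (hjn : j ≤ n) :
    ∑ k ∈ Finset.Icc j n, q ^ k / (r ^ k - q ^ k) ≤ - Real.log (1 - q / r) / Real.log (r / q) :=
  stmt_15_general r q hq hqr j n hj
end
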